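/- For d_1, d_2 ≥ 1 and s sufficiently large, there exists a surjective map of sheaves M_1^{⊕s} → M_{d_1} ⊕ M_{d_2} on P^n, where each summand M_1 → M_{d_1} ⊕ M_{d_2} is given by s ↦ (s·P_1, s·P_2) for a pair of polynomials P_i ∈ H^0(P^n, O(d_i − 1)). -/

import Mathlib

/-!
A form `Q` of degree `d + 1` vanishing at `x` with `x k ≠ 0` lies in the ideal generated by the
linear forms `ℓ i = X i - (x i / x k) X k`, which vanish at `x`: modulo these every `X i` becomes
`(x i / x k) X k`, so `Q` becomes `Q (x / x k) * X k ^ (d + 1) = 0`. Taking the degree `d + 1`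
component of `Q = ∑ gᵢ ℓᵢ` makes every `gᵢ` a form of degree `d`, so `Q` lies in the product of
the fibre of `M₁` at `x` with the forms of degree `d`. Expanding the `gᵢ` in a fixed finite
spanning family `P` of these forms writes `Q = ∑ tⱼ Pⱼ` with `tⱼ` in the fibre of `M₁`. For the
two degrees `d₁, d₂` one concatenates the two spanning families, padded by zeros.
-/

open MvPolynomial

theorem Submodule.exists_sum_mul_eq_of_mem_mul_span_range {R A ι : Type*} [CommSemiring R]
    [CommSemiring A] [Algebra R A] [Fintype ι] {M : Submodule R A} {P : ι → A} {a : A}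
    (ha : a ∈ M * span R (Set.range P)) :
    ∃ t : ι → A, (∀ j, t j ∈ M) ∧ ∑ j, t j * P j = a := by
  refine Submodule.mul_induction_on ha (fun m hm b hb => ?_)
    fun a b ⟨t, ht, hta⟩ ⟨u, hu, hub⟩ => ?_
  · obtain ⟨c, rfl⟩ := (mem_span_range_iff_exists_fun R).1 hb
    exact ⟨fun j => c j • m, fun j => M.smul_mem _ hm, by simp [Finset.mul_sum]⟩
  · exact ⟨t + u, fun j => M.add_mem (ht j) (hu j),
      by simp [add_mul, Finset.sum_add_distrib, hta, hub]⟩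

namespace MvPolynomial

section CommSemiring

variable {σ R : Type*} [CommSemiring R]

theorem IsHomogeneous.aeval_mul_left {S : Type*} [CommSemiring S] [Algebra R S]
    {p : MvPolynomial σ R} {d : ℕ} (hp : p.IsHomogeneous d) (t : S) (z : σ → S) :
    MvPolynomial.aeval (fun i => t * z i) p = t ^ d * MvPolynomial.aeval z p := by
  rw [p.as_sum, map_sum, map_sum, Finset.mul_sum]
  refine Finset.sum_congr rfl fun s hs => ?_
  simp only [aeval_monomial, Finsupp.prod, mul_pow, Finset.prod_mul_distrib,
    Finset.prod_pow_eq_pow_sum, ← hp.degree_eq_sum_deg_support hs]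
  ring

attribute [local instance] gradedAlgebra in
theorem homogeneousComponent_mul_of_isHomogeneous_right {p q : MvPolynomial σ R} {e : ℕ}
    (hq : q.IsHomogeneous e) (m : ℕ) :
    homogeneousComponent (m + e) (p * q) = homogeneousComponent m p * q := by
  have := DirectSum.coe_decompose_mul_of_right_mem_of_le (𝒜 := homogeneousSubmodule σ R)
    (a := p) (n := m + e) hq (Nat.le_add_left e m)
  rw [Nat.add_sub_cancel] at this
  rwa [← decomposition.decompose'_apply, ← decomposition.decompose'_apply]

end CommSemiring

section Field

variable {σ K : Type*} [Field K]

/-- The fibre at `x` of the kernel bundle `M_d`, viewed on the affine cone over `ℙ(σ)`. -/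
noncomputable def lazarsfeldFiber (d : ℕ) (x : σ → K) : Submodule K (MvPolynomial σ K) :=
  homogeneousSubmodule σ K d ⊓ LinearMap.ker (aeval x).toLinearMap

@[simp]
theorem mem_lazarsfeldFiber {d : ℕ} {x : σ → K} {Q : MvPolynomial σ K} :
    Q ∈ lazarsfeldFiber d x ↔ Q.IsHomogeneous d ∧ eval x Q = 0 :=
  Iff.rfl

theorem mem_ideal_span_of_isHomogeneous_of_eval_eq_zero {x : σ → K} {k : σ} (hk : x k ≠ 0)
    {Q : MvPolynomial σ K} {d : ℕ} (hQ : Q.IsHomogeneous d) (hQx : eval x Q = 0) :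
    Q ∈ Ideal.span (Set.range fun i => X i - C (x i / x k) * X k) := by
  set I := Ideal.span (Set.range fun i => X i - C (x i / x k) * X k)
  set π := Ideal.Quotient.mkₐ K I
  have hX (i : σ) : π (X i) = π (X k) * algebraMap K _ (x i / x k) := by
    have hℓ : π (X i - C (x i / x k) * X k) = 0 := by
      rw [Ideal.Quotient.mkₐ_eq_mk, Ideal.Quotient.eq_zero_iff_mem]
      exact Ideal.subset_span ⟨i, rfl⟩
    rwa [map_sub, map_mul, ← algebraMap_eq, AlgHom.commutes, sub_eq_zero, mul_comm] at hℓ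
  have hy : eval (fun i => x i / x k) Q = 0 := by
    have := hQ.aeval_mul_left (x k) (fun i => x i / x k)
    simp only [mul_div_cancel₀ _ hk, aeval_eq_eval, hQx] at this
    exact (mul_eq_zero.1 this.symm).resolve_left (pow_ne_zero _ hk)
  rw [← Ideal.Quotient.eq_zero_iff_mem, ← Ideal.Quotient.mkₐ_eq_mk K]
  calc π Q = aeval (fun i => π (X i)) Q := by rw [← comp_aeval_apply, aeval_X_left_apply]
    _ = π (X k) ^ d * aeval (fun i => algebraMap K _ (x i / x k)) Q := by
      rw [_root_.funext hX]
      exact hQ.aeval_mul_left _ _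
    _ = π (X k) ^ d * Algebra.ofId K _ (eval (fun i => x i / x k) Q) :=
      congrArg _ (comp_aeval_apply (fun i => x i / x k) (Algebra.ofId K _) Q).symm
    _ = 0 := by rw [hy, map_zero, mul_zero]

theorem lazarsfeldFiber_succ_le_mul [Fintype σ] {x : σ → K} (hx : x ≠ 0) (d : ℕ) :
    lazarsfeldFiber (d + 1) x ≤ lazarsfeldFiber 1 x * homogeneousSubmodule σ K d := by
  rintro Q ⟨hQ, hQx⟩
  obtain ⟨k, hk⟩ : ∃ k, x k ≠ 0 := Function.ne_iff.1 hx
  set ℓ : σ → MvPolynomial σ K := fun i => X i - C (x i / x k) * X k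
  have hℓ (i : σ) : ℓ i ∈ lazarsfeldFiber 1 x :=
    ⟨(isHomogeneous_X _ _).sub ((isHomogeneous_X _ _).C_mul _),
      by simp [ℓ, div_mul_cancel₀ _ hk]⟩
  obtain ⟨g, hg⟩ := Ideal.mem_span_range_iff_exists_fun.1
    (mem_ideal_span_of_isHomogeneous_of_eval_eq_zero hk hQ hQx)
  rw [← homogeneousComponent_eq_self hQ, ← hg, map_sum]
  refine Submodule.sum_mem _ fun i _ => ?_
  rw [homogeneousComponent_mul_of_isHomogeneous_right (hℓ i).1]
  exact Submodule.mul_mem_mul_rev (hℓ i) (homogeneousComponent_mem _ _)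

end Field

end MvPolynomial

/-- Lemma 2.5: For `d₁, d₂ ≥ 1` there are `s` and pairs of polynomials
`P₁ⱼ ∈ H⁰(ℙⁿ, O(d₁−1))`, `P₂ⱼ ∈ H⁰(ℙⁿ, O(d₂−1))` so that the induced map of sheaves
`M₁^{⊕s} → M_{d₁} ⊕ M_{d₂}`, whose `j`-th component is `t ↦ (t·P₁ⱼ, t·P₂ⱼ)`, is
surjective.  Surjectivity is expressed on fibers: the fiber of `M_d` at a point
`x ≠ 0` of `𝔸^{n+1} \ 0` is the space of degree-`d` forms vanishing at `x`, and every
pair `(Q₁, Q₂)` of such forms is `(∑ tⱼ P₁ⱼ, ∑ tⱼ P₂ⱼ)` for linear forms `tⱼ`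
vanishing at `x`. -/
theorem stmt_13 (n d1 d2 : ℕ) (hd1 : 1 ≤ d1) (hd2 : 1 ≤ d2) :
    ∃ (s : ℕ) (P1 P2 : Fin s → MvPolynomial (Fin (n + 1)) ℂ),
      (∀ j, P1 j ∈ homogeneousSubmodule (Fin (n + 1)) ℂ (d1 - 1)) ∧
      (∀ j, P2 j ∈ homogeneousSubmodule (Fin (n + 1)) ℂ (d2 - 1)) ∧
      ∀ (x : Fin (n + 1) → ℂ), x ≠ 0 →
        ∀ Q1 Q2 : MvPolynomial (Fin (n + 1)) ℂ,
          Q1 ∈ homogeneousSubmodule (Fin (n + 1)) ℂ d1 → eval x Q1 = 0 →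
          Q2 ∈ homogeneousSubmodule (Fin (n + 1)) ℂ d2 → eval x Q2 = 0 →
          ∃ t : Fin s → MvPolynomial (Fin (n + 1)) ℂ,
            (∀ j, t j ∈ homogeneousSubmodule (Fin (n + 1)) ℂ 1 ∧ eval x (t j) = 0) ∧
            Q1 = ∑ j, t j * P1 j ∧ Q2 = ∑ j, t j * P2 j := by
  obtain ⟨e1, rfl⟩ : ∃ e, d1 = e + 1 := ⟨d1 - 1, by omega⟩
  obtain ⟨e2, rfl⟩ : ∃ e, d2 = e + 1 := ⟨d2 - 1, by omega⟩
  obtain ⟨s1, P1, hP1⟩ := Submodule.fg_iff_exists_fin_generating_family.1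
    (homogeneousSubmodule_fg (Fin (n + 1)) ℂ e1)
  obtain ⟨s2, P2, hP2⟩ := Submodule.fg_iff_exists_fin_generating_family.1
    (homogeneousSubmodule_fg (Fin (n + 1)) ℂ e2)
  have hP1_mem (j : Fin s1) : P1 j ∈ homogeneousSubmodule (Fin (n + 1)) ℂ e1 :=
    hP1 ▸ Submodule.subset_span ⟨j, rfl⟩
  have hP2_mem (j : Fin s2) : P2 j ∈ homogeneousSubmodule (Fin (n + 1)) ℂ e2 :=
    hP2 ▸ Submodule.subset_span ⟨j, rfl⟩
  refine ⟨s1 + s2, Fin.append P1 0, Fin.append 0 P2, Fin.addCases (by simpa using hP1_mem)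
    (by simp), Fin.addCases (by simp) (by simpa using hP2_mem), ?_⟩
  intro x hx Q1 Q2 hQ1 hQ1x hQ2 hQ2x
  obtain ⟨t1, ht1, rfl⟩ := Submodule.exists_sum_mul_eq_of_mem_mul_span_range
    (hP1 ▸ lazarsfeldFiber_succ_le_mul hx e1 ⟨hQ1, hQ1x⟩)
  obtain ⟨t2, ht2, rfl⟩ := Submodule.exists_sum_mul_eq_of_mem_mul_span_range
    (hP2 ▸ lazarsfeldFiber_succ_le_mul hx e2 ⟨hQ2, hQ2x⟩)
  exact ⟨Fin.append t1 t2, Fin.addCases (by simpa using ht1) (by simpa using ht2),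
    by simp [Fin.sum_univ_add], by simp [Fin.sum_univ_add]⟩
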